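/- Let B and R be disjoint finite sets of blue and red points in the plane in general position, with |B| = b and |R| ≤ b − 3. Fix any blue point p ∈ B. Then there exist two other blue points q, q' ∈ B such that the closed triangle with vertices p, q, q' contains no red point of R. -/

import Mathlib

/-!
Draw the line through `p` and another blue point `q`. The other `b - 2` blue points outnumber the
red ones, so on one side of this line there are more blue than red points. Order the blue points
on that side by angle around `p`, starting from `q`: consecutive points bound as many disjoint open
wedges at `p` as there are blue points on that side, so one of these wedges, say between `a` and
`b`, contains no red point. The triangle `p a b` lies in the closure of this wedge, and by general
position no red point lies on its bounding rays.
-/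

abbrev Pt := ℝ × ℝ

def GenPos (P : Finset Pt) : Prop :=
  ∀ p ∈ P, ∀ q ∈ P, ∀ r ∈ P, p ≠ q → p ≠ r → q ≠ r → ¬ Collinear ℝ ({p, q, r} : Set Pt)

open Finset

namespace EmptyTriangle

/-- The determinant of `u` and `v`, scaled by `ε`; `ε = ±1` selects an orientation of the plane. -/
def cross (ε : ℝ) (u v : Pt) : ℝ := ε * (u.1 * v.2 - u.2 * v.1)

def dot (u v : Pt) : ℝ := u.1 * v.1 + u.2 * v.2

def InWedge (ε : ℝ) (p a b r : Pt) : Prop :=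
  0 < cross ε (a - p) (r - p) ∧ 0 < cross ε (r - p) (b - p)

variable {ε : ℝ}

lemma cross_swap (u v : Pt) : cross ε u v = -cross ε v u := by unfold cross; ring

lemma cross_self (u : Pt) : cross ε u u = 0 := by unfold cross; ring

lemma cross_eq_mul (u v : Pt) : cross ε u v = ε * cross 1 u v := by unfold cross; ring

lemma cross_smul_add_smul (w u v : Pt) (s t : ℝ) :
    cross ε w (s • u + t • v) = s * cross ε w u + t * cross ε w v := by
  simp only [cross, Prod.fst_add, Prod.snd_add, Prod.smul_fst, Prod.smul_snd, smul_eq_mul]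
  ring

lemma cross_mul_cross (u x y z : Pt) :
    cross ε u y * cross ε x z = cross ε u x * cross ε y z + cross ε u z * cross ε x y := by
  unfold cross; ring

lemma ne_zero_of_cross_pos {u v : Pt} (h : 0 < cross ε u v) : u ≠ 0 := by
  rintro rfl
  simp [cross] at h

lemma dot_self_pos {u : Pt} (hu : u ≠ 0) : 0 < dot u u := by
  have : u.1 ≠ 0 ∨ u.2 ≠ 0 := by
    by_contra! h
    exact hu (Prod.ext h.1 h.2)
  unfold dot
  rcases this with h | h
  · nlinarith [mul_self_pos.2 h, mul_self_nonneg u.2]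
  · nlinarith [mul_self_pos.2 h, mul_self_nonneg u.1]

lemma dot_div_dot_smul_of_cross_eq_zero (hε : ε ≠ 0) {v w : Pt} (hw : w ≠ 0)
    (h : cross ε w v = 0) : (dot v w / dot w w) • w = v := by
  have hww := (dot_self_pos hw).ne'
  have hc : w.1 * v.2 - w.2 * v.1 = 0 := (mul_eq_zero.1 h).resolve_left hε
  unfold dot at hww ⊢
  ext <;> simp only [Prod.smul_fst, Prod.smul_snd, smul_eq_mul] <;>
    rw [div_mul_eq_mul_div, div_eq_iff hww]
  · linear_combination w.2 * hc
  · linear_combination -w.1 * hc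

lemma collinear_of_cross_sub_eq_zero (hε : ε ≠ 0) {p q r : Pt} (hqp : q ≠ p)
    (h : cross ε (q - p) (r - p) = 0) : Collinear ℝ ({p, q, r} : Set Pt) := by
  rw [collinear_iff_of_mem (Set.mem_insert p _)]
  refine ⟨q - p, ?_⟩
  simp only [Set.mem_insert_iff, Set.mem_singleton_iff, forall_eq_or_imp, forall_eq]
  refine ⟨⟨0, by simp⟩, ⟨1, by simp⟩, ⟨dot (r - p) (q - p) / dot (q - p) (q - p), ?_⟩⟩
  rw [dot_div_dot_smul_of_cross_eq_zero hε (sub_ne_zero.2 hqp) h, vadd_eq_add, sub_add_cancel]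

lemma _root_.GenPos.cross_sub_ne_zero {P : Finset Pt} (hP : GenPos P) (hε : ε ≠ 0)
    {p x y : Pt} (hp : p ∈ P) (hx : x ∈ P.erase p) (hy : y ∈ P.erase p) (hxy : x ≠ y) :
    cross ε (x - p) (y - p) ≠ 0 := fun h =>
  hP p hp x (mem_of_mem_erase hx) y (mem_of_mem_erase hy) (ne_of_mem_erase hx).symm
    (ne_of_mem_erase hy).symm hxy (collinear_of_cross_sub_eq_zero hε (ne_of_mem_erase hx) h)

/-- `dot u x / cross ε u x` is the cotangent of the angle from `u` to `x`. -/
lemma dot_div_cross_lt {u a b : Pt} (ha : 0 < cross ε u a) (hb : 0 < cross ε u b)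
    (hab : 0 < cross ε a b) : dot u b / cross ε u b < dot u a / cross ε u a := by
  rw [div_lt_div_iff₀ hb ha]
  have key : dot u a * cross ε u b - dot u b * cross ε u a = dot u u * cross ε a b := by
    unfold dot cross; ring
  nlinarith [mul_pos (dot_self_pos (ne_zero_of_cross_pos ha)) hab]

lemma cross_pos_trans {u x y z : Pt} (hx : 0 < cross ε u x) (hy : 0 < cross ε u y)
    (hz : 0 < cross ε u z) (hxy : 0 < cross ε x y) (hyz : 0 < cross ε y z) :
    0 < cross ε x z := by
  refine pos_of_mul_pos_right ?_ hy.le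
  rw [cross_mul_cross u x y z]
  positivity

lemma exists_card_filter_mul_pos_lt {α : Type*} {s t : Finset α} (f : α → ℝ)
    (hs : ∀ x ∈ s, f x ≠ 0) (hts : #t < #s) :
    ∃ ε : ℝ, ε ≠ 0 ∧ #(t.filter fun x => 0 < ε * f x) < #(s.filter fun x => 0 < ε * f x) := by
  have hneg (u : Finset α) : u.filter (fun x => 0 < -1 * f x) ⊆ u.filter fun x => ¬ 0 < 1 * f x :=
    monotone_filter_right _ fun x h h' => by linarith
  have ht := card_le_card (hneg t)
  have hs' : s.filter (fun x => 0 < -1 * f x) = s.filter fun x => ¬ 0 < 1 * f x :=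
    (hneg s).antisymm fun x hx => by
      obtain ⟨hxs, hx⟩ := mem_filter.1 hx
      exact mem_filter.2 ⟨hxs, by linarith [(hs x hxs).lt_of_le (not_lt.1 (by simpa using hx))]⟩
  have ht_split := card_filter_add_card_filter_not (s := t) fun x => 0 < 1 * f x
  have hs_split := card_filter_add_card_filter_not (s := s) fun x => 0 < 1 * f x
  by_contra! h
  have hpos := h 1 one_ne_zero
  have hneg := h (-1) (by norm_num)
  rw [hs'] at hneg
  omega

section Wedge

variable {p q : Pt}

lemma exists_first_of_cross_pos {S : Finset Pt} (hS : S.Nonempty)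
    (hpos : ∀ x ∈ S, 0 < cross ε (q - p) (x - p))
    (hgen : ∀ x ∈ S, ∀ y ∈ S, x ≠ y → cross ε (x - p) (y - p) ≠ 0) :
    ∃ b ∈ S, ∀ x ∈ S, x ≠ b → 0 < cross ε (b - p) (x - p) := by
  obtain ⟨b, hb, hmax⟩ := S.exists_max_image
    (fun x => dot (q - p) (x - p) / cross ε (q - p) (x - p)) hS
  refine ⟨b, hb, fun x hx hxb => (hgen b hb x hx (Ne.symm hxb)).lt_or_gt.resolve_left ?_⟩
  intro hneg
  rw [cross_swap, neg_lt_zero] at hneg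
  exact (dot_div_cross_lt (hpos x hx) (hpos b hb) hneg).not_ge (hmax x hx)

lemma exists_nonneg_smul_add_of_mem_convexHull {q' x : Pt}
    (hx : x ∈ convexHull ℝ ({p, q, q'} : Set Pt)) :
    ∃ s t : ℝ, 0 ≤ s ∧ 0 ≤ t ∧ x - p = s • (q - p) + t • (q' - p) := by
  refine convexHull_min (t := {y | ∃ s t : ℝ, 0 ≤ s ∧ 0 ≤ t ∧
    y - p = s • (q - p) + t • (q' - p)}) ?_ ?_ hx
  · simp only [Set.insert_subset_iff, Set.singleton_subset_iff]
    exact ⟨⟨0, 0, le_rfl, le_rfl, by simp⟩, ⟨1, 0, zero_le_one, le_rfl, by simp⟩,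
      ⟨0, 1, le_rfl, zero_le_one, by simp⟩⟩
  · rintro x ⟨s₁, t₁, hs₁, ht₁, hx⟩ y ⟨s₂, t₂, hs₂, ht₂, hy⟩ a b ha hb hab
    exact ⟨a * s₁ + b * s₂, a * t₁ + b * t₂, by positivity, by positivity,
      by linear_combination (norm := module) a • hx + b • hy + hab • p⟩

lemma inWedge_of_mem_convexHull {a b r : Pt} (hab : 0 < cross ε (a - p) (b - p))
    (har : cross ε (a - p) (r - p) ≠ 0) (hbr : cross ε (b - p) (r - p) ≠ 0)
    (hr : r ∈ convexHull ℝ ({p, a, b} : Set Pt)) : InWedge ε p a b r := by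
  obtain ⟨s, t, hs, ht, hrst⟩ := exists_nonneg_smul_add_of_mem_convexHull hr
  have hta : cross ε (a - p) (r - p) = t * cross ε (a - p) (b - p) := by
    rw [hrst, cross_smul_add_smul, cross_self]; ring
  have hsb : cross ε (r - p) (b - p) = s * cross ε (a - p) (b - p) := by
    rw [cross_swap, hrst, cross_smul_add_smul, cross_self, cross_swap (b - p)]; ring
  rw [cross_swap, neg_ne_zero, hsb] at hbr
  rw [hta] at har
  rw [InWedge, hta, hsb]
  exact ⟨mul_pos (ht.lt_of_ne' (left_ne_zero_of_mul har)) hab,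
    mul_pos (hs.lt_of_ne' (left_ne_zero_of_mul hbr)) hab⟩

lemma cross_pos_of_mem_convexHull {a b r : Pt} (ha : 0 ≤ cross ε (q - p) (a - p))
    (hb : 0 < cross ε (q - p) (b - p)) (hqr : cross ε (q - p) (r - p) ≠ 0)
    (hr : r ∈ convexHull ℝ ({p, a, b} : Set Pt)) : 0 < cross ε (q - p) (r - p) := by
  obtain ⟨s, t, hs, ht, hrst⟩ := exists_nonneg_smul_add_of_mem_convexHull hr
  rw [hrst, cross_smul_add_smul] at hqr ⊢
  exact lt_of_le_of_ne (by positivity) hqr.symm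

/-- Sweeping around `p` from `q` through the points of `S` in angular order, the fewer points
of `T` cannot occupy every gap. -/
theorem exists_not_inWedge_of_card_lt (S : Finset Pt) :
    ∀ (q : Pt) (T : Finset Pt), (∀ x ∈ S, 0 < cross ε (q - p) (x - p)) →
    (∀ r ∈ T, 0 < cross ε (q - p) (r - p)) → Disjoint S T →
    (∀ x ∈ S ∪ T, ∀ y ∈ S ∪ T, x ≠ y → cross ε (x - p) (y - p) ≠ 0) → #T < #S →
    ∃ a b, (a = q ∨ a ∈ S) ∧ b ∈ S ∧ 0 < cross ε (a - p) (b - p) ∧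
      ∀ r ∈ T, ¬ InWedge ε p a b r := by
  induction S using Finset.strongInduction with
  | H S ih =>
  intro q T hS hT hST hgen hcard
  obtain ⟨b, hb, hfirst⟩ := exists_first_of_cross_pos (card_pos.1 (by omega)) hS
    fun x hx y hy => hgen x (mem_union_left _ hx) y (mem_union_left _ hy)
  by_cases hfree : ∀ r ∈ T, ¬ InWedge ε p q b r
  · exact ⟨q, b, .inl rfl, hb, hS b hb, hfree⟩
  push Not at hfree
  obtain ⟨r₀, hr₀, -, hr₀b⟩ := hfree
  have hbr : ∀ r ∈ T, cross ε (b - p) (r - p) ≠ 0 := fun r hr =>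
    hgen b (mem_union_left _ hb) r (mem_union_right _ hr)
      (ne_of_mem_of_not_mem hr (disjoint_left.1 hST hb)).symm
  set T' := T.filter fun r => 0 < cross ε (b - p) (r - p)
  have hT' : #T' < #T := card_lt_card <| filter_ssubset.2
    ⟨r₀, hr₀, by rw [cross_swap, neg_pos]; exact not_lt.2 hr₀b.le⟩
  obtain ⟨a', b', ha', hb', hab', hfree'⟩ := ih (S.erase b) (erase_ssubset hb) b T'
    (fun x hx => hfirst x (mem_of_mem_erase hx) (ne_of_mem_erase hx))
    (fun r hr => (mem_filter.1 hr).2) (hST.mono (erase_subset _ _) (filter_subset _ _))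
    (fun x hx y hy => hgen x (union_subset_union (erase_subset _ _) (filter_subset _ _) hx)
      y (union_subset_union (erase_subset _ _) (filter_subset _ _) hy))
    (by rw [card_erase_of_mem hb]; omega)
  have ha'S : a' ∈ S := by
    rcases ha' with rfl | ha'
    exacts [hb, mem_of_mem_erase ha']
  refine ⟨a', b', .inr ha'S, mem_of_mem_erase hb', hab', fun r hr hw => ?_⟩
  by_cases hrT' : r ∈ T'
  · exact hfree' r hrT' hw
  have hrb : 0 < cross ε (r - p) (b - p) := by
    rw [cross_swap, neg_pos]
    exact (hbr r hr).lt_of_le (not_lt.1 fun h => hrT' (mem_filter.2 ⟨hr, h⟩))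
  rcases ha' with rfl | ha'
  · exact hrT' (mem_filter.2 ⟨hr, hw.1⟩)
  · have := cross_pos_trans (hT r hr) (hS b hb) (hS a' ha'S) hrb
      (hfirst a' ha'S (ne_of_mem_erase ha'))
    rw [cross_swap, neg_pos] at this
    exact lt_asymm this hw.1

/-- A triangle `p a b` with `a, b` in the closed half-plane beyond `p q` lies in that half-plane,
so only the red points there can obstruct it. -/
theorem exists_empty_triangle_of_card_lt {Bl S R : Finset Pt} (hq : q ∈ Bl) (hSB : S ⊆ Bl)
    (hBR : Disjoint Bl R)
    (hgen : ∀ x ∈ Bl ∪ R, ∀ y ∈ Bl ∪ R, x ≠ y → cross ε (x - p) (y - p) ≠ 0)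
    (hS : ∀ x ∈ S, 0 < cross ε (q - p) (x - p))
    (hcard : #(R.filter fun r => 0 < cross ε (q - p) (r - p)) < #S) :
    ∃ a ∈ Bl, ∃ b ∈ Bl, a ≠ b ∧ ∀ r ∈ R, r ∉ convexHull ℝ ({p, a, b} : Set Pt) := by
  set T := R.filter fun r => 0 < cross ε (q - p) (r - p)
  have hST : S ∪ T ⊆ Bl ∪ R := union_subset_union hSB (filter_subset _ _)
  obtain ⟨a, b, ha, hb, hab, hfree⟩ := exists_not_inWedge_of_card_lt S q T hS
    (fun r hr => (mem_filter.1 hr).2) ((hBR.mono_left hSB).mono_right (filter_subset _ _))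
    (fun x hx y hy => hgen x (hST hx) y (hST hy)) hcard
  have haB : a ∈ Bl := ha.elim (· ▸ hq) (hSB ·)
  refine ⟨a, haB, b, hSB hb, ?_, fun r hr hmem => ?_⟩
  · rintro rfl
    rw [cross_self] at hab
    exact hab.false
  have hne (x) (hx : x ∈ Bl) : cross ε (x - p) (r - p) ≠ 0 :=
    hgen x (mem_union_left _ hx) r (mem_union_right _ hr)
      (ne_of_mem_of_not_mem hx (disjoint_right.1 hBR hr))
  have hqa : 0 ≤ cross ε (q - p) (a - p) := ha.elim (fun h => h ▸ (cross_self _).ge) fun h => (hS a h).le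
  have hrT : r ∈ T := mem_filter.2 ⟨hr, cross_pos_of_mem_convexHull hqa (hS b hb) (hne q hq) hmem⟩
  exact hfree r hrT (inWedge_of_mem_convexHull hab (hne a haB) (hne b (hSB hb)) hmem)

end Wedge

end EmptyTriangle

open EmptyTriangle

theorem stmt2_general (B R : Finset Pt) (hdisj : Disjoint B R) (hgp : GenPos (B ∪ R))
    (hcard : R.card + 3 ≤ B.card)
    (p : Pt) (hp : p ∈ B) :
    ∃ q ∈ B, ∃ q' ∈ B, q ≠ p ∧ q' ≠ p ∧ q ≠ q' ∧
      ∀ r ∈ R, r ∉ convexHull ℝ ({p, q, q'} : Set Pt) := by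
  obtain ⟨q, hq⟩ : (B.erase p).Nonempty := by
    rw [← card_pos, card_erase_of_mem hp]; omega
  have hsub : B.erase p ∪ R ⊆ (B ∪ R).erase p := by
    rw [erase_union_distrib, erase_eq_of_notMem (disjoint_left.1 hdisj hp)]
  have hgen {ε : ℝ} (hε : ε ≠ 0) :
      ∀ x ∈ B.erase p ∪ R, ∀ y ∈ B.erase p ∪ R, x ≠ y → cross ε (x - p) (y - p) ≠ 0 :=
    fun x hx y hy => hgp.cross_sub_ne_zero hε (mem_union_left _ hp) (hsub hx) (hsub hy)
  obtain ⟨ε, hε, hlt⟩ := exists_card_filter_mul_pos_lt (s := ((B.erase p).erase q)) (t := R)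
    (fun x => cross 1 (q - p) (x - p))
    (fun x hx => hgen one_ne_zero q (mem_union_left _ hq) x
      (mem_union_left _ (mem_of_mem_erase hx)) (ne_of_mem_erase hx).symm)
    (by rw [card_erase_of_mem hq, card_erase_of_mem hp]; omega)
  simp only [← cross_eq_mul] at hlt
  obtain ⟨a, ha, b, hb, hab, hfree⟩ := exists_empty_triangle_of_card_lt hq
    ((filter_subset _ _).trans (erase_subset _ _)) (hdisj.mono_left (erase_subset _ _))
    (hgen hε) (fun x hx => (mem_filter.1 hx).2) hlt
  exact ⟨a, mem_of_mem_erase ha, b, mem_of_mem_erase hb, ne_of_mem_erase ha,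
    ne_of_mem_erase hb, hab, hfree⟩

/-- With `b ≥ 3` blue points and at most `b - 3` red points in general position, for every blue
point `p` there are two other blue points `q, q'` such that the closed triangle `p q q'` contains
no red point. -/
theorem stmt2 (B R : Finset Pt) (hdisj : Disjoint B R) (hgp : GenPos (B ∪ R))
    (hb : 3 ≤ B.card) (hcard : R.card + 3 ≤ B.card)
    (p : Pt) (hp : p ∈ B) :
    ∃ q ∈ B, ∃ q' ∈ B, q ≠ p ∧ q' ≠ p ∧ q ≠ q' ∧
      ∀ r ∈ R, r ∉ convexHull ℝ ({p, q, q'} : Set Pt) :=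
  stmt2_general B R hdisj hgp hcard p hp
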